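/- The value function is nonincreasing in the habit variable: for every k₀ > 0 and every 0 < h₁ < h₂, one has V(k₀,h₁) ≥ V(k₀,h₂) (as elements of [−∞,0]). -/

import Mathlib

open MeasureTheory ProbabilityTheory Real Set Matrix
open scoped ENNReal NNReal

noncomputable section

namespace HabitModel

/-- A standard Brownian motion with respect to the filtration `F`: adapted, with continuous
paths started at `0`, whose increments are independent of the past and Gaussian. -/
structure IsStdBM {Ω : Type*} {mΩ : MeasurableSpace Ω} (P : Measure Ω)
    (F : Filtration ℝ mΩ) (W : ℝ → Ω → ℝ) : Prop where
  adapted : Adapted F W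
  cont : ∀ ω, Continuous fun t => W t ω
  init : ∀ ω, W 0 ω = 0
  indep_incr : ∀ s t : ℝ, 0 ≤ s → s ≤ t →
    Indep (MeasurableSpace.comap (fun ω => W t ω - W s ω) inferInstance) (F s) P
  gauss_incr : ∀ s t : ℝ, 0 ≤ s → s ≤ t →
    P.map (fun ω => W t ω - W s ω) = gaussianReal 0 (Real.toNNReal (t - s))

/-- The stochastic setting of the model: a filtered probability space carrying two
independent standard Brownian motions, together with the model parameters. -/
structure Setting (Ω : Type*) [mΩ : MeasurableSpace Ω] where
  P : Measure Ω
  isProb : IsProbabilityMeasure P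
  F : Filtration ℝ mΩ
  W1 : ℝ → Ω → ℝ
  W2 : ℝ → Ω → ℝ
  bm1 : IsStdBM P F W1
  bm2 : IsStdBM P F W2
  indepW : Indep (⨆ t : ℝ, MeasurableSpace.comap (W1 t) inferInstance)
      (⨆ t : ℝ, MeasurableSpace.comap (W2 t) inferInstance) P
  B : ℝ
  β₁ : ℝ
  β₂ : ℝ
  ρ : ℝ
  θ : ℝ
  σ : ℝ
  γ : ℝ
  R : ℝ
  hB : 0 ≤ B
  hβ₁ : 0 < β₁
  hβ₂ : 0 < β₂
  hρ₀ : 0 < ρ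
  hρ₁ : ρ < 1
  hθ : 0 < θ
  hσ : 1 < σ
  hγ₀ : 0 ≤ γ
  hγ₁ : γ < 1
  hR : 0 < R

variable {Ω : Type*} [mΩ : MeasurableSpace Ω]

/-- Pathwise-explicit solution of `dk_t = (B k_t - c_t) dt + β₁ k_t dW¹_t`, `k_0 = k₀`. -/
def kProc (S : Setting Ω) (k₀ : ℝ) (c : ℝ → Ω → ℝ) (t : ℝ) (ω : Ω) : ℝ :=
  Real.exp ((S.B - S.β₁ ^ 2 / 2) * t + S.β₁ * S.W1 t ω) *
    (k₀ - ∫ s in (0:ℝ)..t, c s ω * Real.exp (-((S.B - S.β₁ ^ 2 / 2) * s) - S.β₁ * S.W1 s ω))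

/-- Pathwise-explicit solution of `dh_t = ρ (c_t - h_t) dt + β₂ h_t dW²_t`, `h_0 = h₀`. -/
def hProc (S : Setting Ω) (h₀ : ℝ) (c : ℝ → Ω → ℝ) (t : ℝ) (ω : Ω) : ℝ :=
  Real.exp ((-S.ρ - S.β₂ ^ 2 / 2) * t + S.β₂ * S.W2 t ω) *
    (h₀ + S.ρ * ∫ s in (0:ℝ)..t, c s ω * Real.exp ((S.ρ + S.β₂ ^ 2 / 2) * s - S.β₂ * S.W2 s ω))

/-- Admissibility of a control `c` for the initial condition `(k₀, h₀)`: progressively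
measurable, a.s. locally integrable trajectories, `c > 0` ℙ⊗dt-a.e., positive state
processes, and `c ≤ R·k` ℙ⊗dt-a.e. -/
structure IsAdmissible (S : Setting Ω) (k₀ h₀ : ℝ) (c : ℝ → Ω → ℝ) : Prop where
  prog : ProgMeasurable S.F c
  locInt : ∀ᵐ ω ∂S.P, ∀ t : ℝ, 0 ≤ t → IntervalIntegrable (fun s => c s ω) volume 0 t
  cpos : ∀ᵐ ω ∂S.P, ∀ᵐ t ∂(volume.restrict (Set.Ici (0:ℝ))), 0 < c t ω
  kpos : ∀ᵐ ω ∂S.P, ∀ t : ℝ, 0 ≤ t → 0 < kProc S k₀ c t ω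
  hpos : ∀ᵐ ω ∂S.P, ∀ t : ℝ, 0 ≤ t → 0 < hProc S h₀ c t ω
  cbdd : ∀ᵐ ω ∂S.P, ∀ᵐ t ∂(volume.restrict (Set.Ici (0:ℝ))), c t ω ≤ S.R * kProc S k₀ c t ω

/-- The (nonnegative) cost `-J(k₀,h₀;c) ∈ [0,∞]`; note that
`(1/(1-σ))·(c/h^γ)^(1-σ) = -(1/(σ-1))·(h^γ/c)^(σ-1)`. -/
def Jcost (S : Setting Ω) (k₀ h₀ : ℝ) (c : ℝ → Ω → ℝ) : ℝ≥0∞ :=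
  ∫⁻ ω, (∫⁻ t in Set.Ioi (0:ℝ),
    ENNReal.ofReal ((S.σ - 1)⁻¹ * ((hProc S h₀ c t ω) ^ S.γ / c t ω) ^ (S.σ - 1) *
      Real.exp (-S.θ * t))) ∂S.P

/-- The utility functional `J(k₀,h₀;c) ∈ [-∞,0]`. -/
def J (S : Setting Ω) (k₀ h₀ : ℝ) (c : ℝ → Ω → ℝ) : EReal := -(Jcost S k₀ h₀ c : EReal)

/-- The infimum of the costs `-J(k₀,h₀;c)` over admissible controls. -/
def Vcost (S : Setting Ω) (k₀ h₀ : ℝ) : ℝ≥0∞ :=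
  ⨅ c : {c : ℝ → Ω → ℝ // IsAdmissible S k₀ h₀ c}, Jcost S k₀ h₀ c.1

/-- The value function `V(k₀,h₀) = sup_{c ∈ 𝓐(k₀,h₀)} J(k₀,h₀;c) ∈ [-∞,0]`
(the supremum of `J = -Jcost` equals minus the infimum of the costs). -/
def V (S : Setting Ω) (k₀ h₀ : ℝ) : EReal := -(Vcost S k₀ h₀ : EReal)

/-- Assumption 1 on the model parameters (with `λ = max{2, 1/(γ(σ-1))}`; it forces `γ > 0`). -/
def Assumption1 (S : Setting Ω) : Prop :=
  S.B ≤ S.R ∧ 0 < S.γ ∧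
    (S.ρ + (S.β₂ ^ 2 - S.β₁ ^ 2) / 2 ≤ 0 →
      (S.σ - 1) * (-S.γ * S.ρ - (S.γ * S.β₂ ^ 2 - S.β₁ ^ 2) / 2 +
        max 2 (1 / (S.γ * (S.σ - 1))) * (S.σ - 1) * (S.β₁ ^ 2 + S.γ ^ 2 * S.β₂ ^ 2)) < S.θ) ∧
    (0 < S.ρ + (S.β₂ ^ 2 - S.β₁ ^ 2) / 2 →
      (S.σ - 1) * (S.β₁ ^ 2 * (1 - S.γ) / 2 +
        max 2 (1 / (S.γ * (S.σ - 1))) * (S.σ - 1) * (S.β₁ ^ 2 + S.γ ^ 2 * S.β₂ ^ 2)) < S.θ)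

/-! Lowering the initial habit keeps every control admissible, because the positivity of the habit
process is automatic once `c > 0` and `h₀ > 0`, and it lowers the habit path pointwise, hence the
cost integrand `(σ - 1)⁻¹ (h ^ γ / c) ^ (σ - 1) e^(-θt)`. So the infimum of the costs can only
decrease. -/

lemma hProc_mono_habit (S : Setting Ω) {h₁ h₂ : ℝ} (hh : h₁ ≤ h₂) (c : ℝ → Ω → ℝ)
    (t : ℝ) (ω : Ω) : hProc S h₁ c t ω ≤ hProc S h₂ c t ω :=
  mul_le_mul_of_nonneg_left (by gcongr) (Real.exp_pos _).le

lemma hProc_pos_of_nonneg (S : Setting Ω) {h₀ : ℝ} (hh₀ : 0 < h₀) {c : ℝ → Ω → ℝ} {ω : Ω}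
    (hc : ∀ᵐ t ∂(volume.restrict (Set.Ici (0:ℝ))), 0 ≤ c t ω) {t : ℝ} (ht : 0 ≤ t) :
    0 < hProc S h₀ c t ω := by
  have hc' : ∀ᵐ s ∂(volume.restrict (Set.Ioc (0:ℝ) t)), 0 ≤ c s ω :=
    ae_restrict_of_ae_restrict_of_subset (Ioc_subset_Icc_self.trans Icc_subset_Ici_self) hc
  have hI : 0 ≤ ∫ s in (0:ℝ)..t,
      c s ω * Real.exp ((S.ρ + S.β₂ ^ 2 / 2) * s - S.β₂ * S.W2 s ω) := by
    rw [intervalIntegral.integral_of_le ht]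
    refine integral_nonneg_of_ae ?_
    filter_upwards [hc'] with s hs
    exact mul_nonneg hs (Real.exp_pos _).le
  exact mul_pos (Real.exp_pos _) (by nlinarith [S.hρ₀])

lemma IsAdmissible.of_habit_pos (S : Setting Ω) {k₀ h₀ h₀' : ℝ} {c : ℝ → Ω → ℝ}
    (hadm : IsAdmissible S k₀ h₀ c) (hh₀' : 0 < h₀') : IsAdmissible S k₀ h₀' c where
  __ := hadm
  hpos := by
    filter_upwards [hadm.cpos] with ω hc t ht
    exact hProc_pos_of_nonneg S hh₀' (hc.mono fun _ h => h.le) ht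

lemma Jcost_mono_habit (S : Setting Ω) {k₀ h₁ h₂ : ℝ} {c : ℝ → Ω → ℝ}
    (hadm : IsAdmissible S k₀ h₁ c) (hh : h₁ ≤ h₂) :
    Jcost S k₀ h₁ c ≤ Jcost S k₀ h₂ c := by
  have hσ : (0:ℝ) ≤ S.σ - 1 := by linarith [S.hσ]
  refine lintegral_mono_ae ?_
  filter_upwards [hadm.hpos, hadm.cpos] with ω hpos hc
  refine lintegral_mono_ae ?_
  filter_upwards [ae_restrict_of_ae_restrict_of_subset Ioi_subset_Ici_self hc,
    ae_restrict_mem measurableSet_Ioi] with t hct (ht : 0 < t)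
  have hh₁t : 0 < hProc S h₁ c t ω := hpos t ht.le
  have hle : hProc S h₁ c t ω ≤ hProc S h₂ c t ω := hProc_mono_habit S hh c t ω
  have hγ : 0 ≤ S.γ := S.hγ₀
  gcongr

lemma Vcost_mono_habit (S : Setting Ω) {k₀ h₁ h₂ : ℝ} (hh₁ : 0 < h₁) (hh : h₁ ≤ h₂) :
    Vcost S k₀ h₁ ≤ Vcost S k₀ h₂ :=
  le_iInf fun c =>
    let hadm := c.2.of_habit_pos S hh₁
    iInf_le_of_le ⟨c.1, hadm⟩ (Jcost_mono_habit S hadm hh)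

lemma V_antitoneOn_habit (S : Setting Ω) (k₀ : ℝ) : AntitoneOn (V S k₀) (Ioi 0) :=
  fun _ hh₁ _ _ hh => by
    rw [V, V, EReal.neg_le_neg_iff, EReal.coe_ennreal_le_coe_ennreal_iff]
    exact Vcost_mono_habit S hh₁ hh

theorem V_antitone_habit_general (S : Setting Ω) (k₀ h₁ h₂ : ℝ)
    (hh₁ : 0 < h₁) (hh : h₁ < h₂) :
    V S k₀ h₂ ≤ V S k₀ h₁ :=
  V_antitoneOn_habit S k₀ hh₁ (hh₁.trans hh) hh.le

/-- The value function is nonincreasing in the habit variable. -/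
theorem V_antitone_habit (S : Setting Ω) (k₀ h₁ h₂ : ℝ) (hk₀ : 0 < k₀)
    (hh₁ : 0 < h₁) (hh : h₁ < h₂) :
    V S k₀ h₂ ≤ V S k₀ h₁ :=
  V_antitone_habit_general S k₀ h₁ h₂ hh₁ hh

end HabitModel
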